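/- arXiv:2302.11653 — 4 statements merged into one kernel-verified Lean document; each statement's English description precedes it below -/
import Mathlib

section
/- Let F be smooth on K° ⊂ ℝⁿ, logarithmically homogeneous of degree n, with positive definite Hessian g = D²F, and suppose F satisfies the Monge–Ampère equation F = (1/2) log det D²F. Then the Laplace–Beltrami operator of (K°, g) annihilates F: Δ_g F = (1/√det g) ∂ᵢ(√det g · gⁱʲ ∂ⱼF) = 0. -/
open Real

/-- The Hessian matrix of `F` at `x`, in coordinates. -/
noncomputable def hessian {n : ℕ} (F : (Fin n → ℝ) → ℝ) (x : Fin n → ℝ) :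
    Matrix (Fin n) (Fin n) ℝ :=
  Matrix.of fun i j => fderiv ℝ (fun y => fderiv ℝ F y (Pi.single j 1)) x (Pi.single i 1)

lemma clm_apply_eq_sum {n : ℕ} (L : (Fin n → ℝ) →L[ℝ] ℝ) (x : Fin n → ℝ) :
    L x = ∑ i, x i * L (Pi.single i 1) := by
  have hx : x = ∑ i, x i • (Pi.single i 1 : Fin n → ℝ) := by
    ext j
    simp [Finset.sum_apply, Pi.single_apply]
  conv_lhs => rw [hx]
  rw [map_sum]
  simp [smul_eq_mul]

/-- A logarithmically homogeneous barrier satisfying the Monge–Ampère equation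
`F = (1/2) log det D²F` is harmonic for the Laplace–Beltrami operator of its
Hessian metric: `Δ_g F = (det g)^{-1/2} ∂ᵢ(√(det g) gⁱʲ ∂ⱼF) = 0`. -/
theorem laplacian_barrier_eq_zero
    (n : ℕ) (K : Set (Fin n → ℝ)) (F : (Fin n → ℝ) → ℝ)
    (hKopen : IsOpen K) (hKconv : Convex ℝ K)
    (hKcone : ∀ x ∈ K, ∀ l : ℝ, 0 < l → l • x ∈ K)
    (hF : ContDiffOn ℝ (⊤ : ℕ∞) F K)
    (hhom : ∀ x ∈ K, ∀ l : ℝ, 0 < l → F (l • x) = F x - n * Real.log l)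
    (hpd : ∀ x ∈ K, (hessian F x).PosDef)
    (hMA : ∀ x ∈ K, F x = (1 / 2) * Real.log (hessian F x).det) :
    ∀ x ∈ K,
      (Real.sqrt (hessian F x).det)⁻¹ *
        ∑ i, fderiv ℝ
          (fun y => Real.sqrt (hessian F y).det *
            ∑ j, (hessian F y)⁻¹ i j * fderiv ℝ F y (Pi.single j 1))
          x (Pi.single i 1) = 0 := by
  -- basic smoothness facts
  have hCA : ∀ x ∈ K, ContDiffAt ℝ (⊤ : ℕ∞) F x := fun x hx =>
    (hF x hx).contDiffAt (hKopen.mem_nhds hx)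
  have hdF : ∀ x ∈ K, DifferentiableAt ℝ F x := fun x hx =>
    (hCA x hx).differentiableAt (by simp)
  have hdf' : ∀ x ∈ K, DifferentiableAt ℝ (fderiv ℝ F) x := fun x hx =>
    ((hCA x hx).fderiv_right (m := 1) (WithTop.coe_le_coe.mpr le_top)).differentiableAt one_ne_zero
  -- Euler identity : DF(x) x = -n
  have hEuler : ∀ x ∈ K, fderiv ℝ F x x = -(n : ℝ) := by
    intro x hx
    have h1 : HasDerivAt (fun l : ℝ => F (l • x)) (fderiv ℝ F x x) 1 := by
      have hin : HasDerivAt (fun l : ℝ => l • x) x 1 := by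
        simpa using (hasDerivAt_id (1 : ℝ)).smul_const x
      have hF' : HasFDerivAt F (fderiv ℝ F x) ((1:ℝ) • x) := by
        simpa using (hdF x hx).hasFDerivAt
      exact hF'.comp_hasDerivAt 1 hin
    have h2 : HasDerivAt (fun l : ℝ => F x - (n : ℝ) * Real.log l) (-(n : ℝ)) 1 := by
      have : HasDerivAt (fun l : ℝ => F x - (n : ℝ) * Real.log l)
          (0 - (n : ℝ) * 1⁻¹) 1 :=
        (hasDerivAt_const (1 : ℝ) (F x)).sub
          ((Real.hasDerivAt_log one_ne_zero).const_mul (n : ℝ))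
      simpa using this
    have hmem : {l : ℝ | 0 < l ∧ l • x ∈ K} ∈ nhds (1 : ℝ) := by
      have hopen : IsOpen {l : ℝ | 0 < l ∧ l • x ∈ K} := by
        have : {l : ℝ | 0 < l ∧ l • x ∈ K}
            = Set.Ioi (0:ℝ) ∩ (fun l : ℝ => l • x) ⁻¹' K := rfl
        rw [this]
        exact isOpen_Ioi.inter (hKopen.preimage (by fun_prop))
      exact hopen.mem_nhds ⟨one_pos, by simpa using hx⟩
    have h1' : HasDerivAt (fun l : ℝ => F x - (n : ℝ) * Real.log l)
        (fderiv ℝ F x x) 1 := by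
      apply h1.congr_of_eventuallyEq
      filter_upwards [hmem] with l hl
      exact (hhom x hx l hl.1).symm ▸ (hhom x hx l hl.1)
    exact h1'.unique h2
  -- hessian entries are the second derivative
  have hessE : ∀ x ∈ K, ∀ i j, hessian F x i j
      = fderiv ℝ (fderiv ℝ F) x (Pi.single i 1) (Pi.single j 1) := by
    intro x hx i j
    have h := fderiv_clm_apply (hdf' x hx)
      (differentiableAt_const (Pi.single j 1 : Fin n → ℝ))
    have : hessian F x i j
        = fderiv ℝ (fun y => fderiv ℝ F y (Pi.single j 1)) x (Pi.single i 1) := rfl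
    rw [this, h]
    simp
  -- symmetry of the hessian
  have hsymm : ∀ x ∈ K, ∀ i j, hessian F x i j = hessian F x j i := by
    intro x hx i j
    have h := (hCA x hx).isSymmSndFDerivAt (by rw [minSmoothness_of_isRCLikeNormedField]; exact WithTop.coe_le_coe.mpr (le_top : (2:ℕ∞) ≤ ⊤))
    rw [hessE x hx i j, hessE x hx j i]
    exact h _ _
  -- gradient identity: ∂ⱼ F = -∑ᵢ xᵢ gᵢⱼ
  have hgrad : ∀ x ∈ K, ∀ j, fderiv ℝ F x (Pi.single j 1)
      = -(∑ i, x i * hessian F x i j) := by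
    intro x hx j
    have hG : (fun y => fderiv ℝ F y y) =ᶠ[nhds x] fun _ => -(n : ℝ) := by
      filter_upwards [hKopen.mem_nhds hx] with y hy
      exact hEuler y hy
    have h0 : fderiv ℝ (fun y => fderiv ℝ F y y) x = 0 := by
      rw [hG.fderiv_eq]; exact fderiv_const_apply _
    have h1 : fderiv ℝ (fun y => fderiv ℝ F y y) x
        = (fderiv ℝ F x).comp (fderiv ℝ (fun y : Fin n → ℝ => y) x)
          + (fderiv ℝ (fderiv ℝ F) x).flip x :=
      fderiv_clm_apply (hdf' x hx) differentiableAt_id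
    have h2 : (fderiv ℝ F x) (Pi.single j 1)
        + (fderiv ℝ (fderiv ℝ F) x (Pi.single j 1)) x = 0 := by
      have := congrArg (fun L => L (Pi.single j 1)) (h1.symm.trans h0)
      simpa using this
    have h3 : (fderiv ℝ (fderiv ℝ F) x (Pi.single j 1)) x
        = ∑ i, x i * hessian F x i j := by
      rw [clm_apply_eq_sum]
      refine Finset.sum_congr rfl fun i _ => ?_
      rw [hsymm x hx i j, hessE x hx j i]
    linarith [h2, h3.symm ▸ h2]
  -- gⁱʲ ∂ⱼF = -xᵢ
  have hsum : ∀ x ∈ K, ∀ i, ∑ j, (hessian F x)⁻¹ i j * fderiv ℝ F x (Pi.single j 1)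
      = -(x i) := by
    intro x hx i
    have hunit : IsUnit (hessian F x).det := (hpd x hx).det_pos.ne'.isUnit
    have hinv : (hessian F x)⁻¹ * hessian F x = 1 :=
      Matrix.nonsing_inv_mul _ hunit
    calc ∑ j, (hessian F x)⁻¹ i j * fderiv ℝ F x (Pi.single j 1)
        = ∑ j, (hessian F x)⁻¹ i j * -(∑ k, x k * hessian F x k j) := by
          refine Finset.sum_congr rfl fun j _ => ?_
          rw [hgrad x hx j]
      _ = -∑ j, ∑ k, (hessian F x)⁻¹ i j * (hessian F x j k * x k) := by
          rw [← Finset.sum_neg_distrib]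
          refine Finset.sum_congr rfl fun j _ => ?_
          rw [mul_neg, Finset.mul_sum]
          congr 1
          refine Finset.sum_congr rfl fun k _ => ?_
          rw [hsymm x hx j k]; ring
      _ = -∑ k, (∑ j, (hessian F x)⁻¹ i j * hessian F x j k) * x k := by
          rw [Finset.sum_comm]
          congr 1
          refine Finset.sum_congr rfl fun k _ => ?_
          rw [Finset.sum_mul]
          exact Finset.sum_congr rfl fun j _ => by ring
      _ = -∑ k, ((1 : Matrix (Fin n) (Fin n) ℝ) i k) * x k := by
          congr 1
          refine Finset.sum_congr rfl fun k _ => ?_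
          have := congrFun (congrFun hinv i) k
          rw [← this]
          rfl
      _ = -(x i) := by simp [Matrix.one_apply]
  -- √det g = exp F
  have hsqrt : ∀ x ∈ K, Real.sqrt (hessian F x).det = Real.exp (F x) := by
    intro x hx
    have hd : (0:ℝ) < (hessian F x).det := (hpd x hx).det_pos
    have h2 : (hessian F x).det = Real.exp (F x) ^ 2 := by
      rw [← Real.exp_nat_mul]
      have : (2:ℝ) * F x = Real.log (hessian F x).det := by
        rw [hMA x hx]; ring
      rw [show ((2:ℕ):ℝ) * F x = (2:ℝ) * F x by norm_num, this, Real.exp_log hd]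
    rw [h2, Real.sqrt_sq (Real.exp_pos _).le]
  -- main computation
  intro x hx
  have hterm : ∀ i, fderiv ℝ
      (fun y => Real.sqrt (hessian F y).det *
        ∑ j, (hessian F y)⁻¹ i j * fderiv ℝ F y (Pi.single j 1))
      x (Pi.single i 1)
      = -(Real.exp (F x)) * (x i * fderiv ℝ F x (Pi.single i 1) + 1) := by
    intro i
    have heq : (fun y => Real.sqrt (hessian F y).det *
        ∑ j, (hessian F y)⁻¹ i j * fderiv ℝ F y (Pi.single j 1))
        =ᶠ[nhds x] fun y => Real.exp (F y) * -(y i) := by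
      filter_upwards [hKopen.mem_nhds hx] with y hy
      rw [hsqrt y hy, hsum y hy i]
    rw [heq.fderiv_eq]
    have hproj : DifferentiableAt ℝ (fun y : Fin n → ℝ => -(y i)) x :=
      (ContinuousLinearMap.proj (R := ℝ) (φ := fun _ : Fin n => ℝ) i).differentiableAt.neg
    rw [fderiv_fun_mul ((hdF x hx).exp) hproj]
    have hpij : fderiv ℝ (fun y : Fin n → ℝ => -(y i)) x
        = -(ContinuousLinearMap.proj (R := ℝ) (φ := fun _ : Fin n => ℝ) i) := by
      rw [fderiv_fun_neg]
      congr 1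
      exact (ContinuousLinearMap.proj (R := ℝ) (φ := fun _ : Fin n => ℝ) i).fderiv
    rw [hpij, fderiv_exp (hdF x hx)]
    simp [Pi.single_apply]
    ring
  have hsum0 : ∑ i, (-(Real.exp (F x)) * (x i * fderiv ℝ F x (Pi.single i 1) + 1)) = 0 := by
    have hEx : ∑ i, x i * fderiv ℝ F x (Pi.single i 1) = -(n : ℝ) := by
      rw [← clm_apply_eq_sum, hEuler x hx]
    rw [← Finset.mul_sum, Finset.sum_add_distrib, hEx]
    simp
  rw [Finset.sum_congr rfl fun i _ => hterm i, hsum0, mul_zero]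
end

section
/- For the metric g = ∑ᵢ π² (dxⁱ)²/sin²(πxⁱ) on the open cube (0,1)ⁿ, each function fⁱ(x) = log(tan(πxⁱ/2)) satisfies Δ_g fⁱ = 0 and |∇fⁱ|²_g = 1, and ∇fⁱ · ∇fʲ = 0 for i ≠ j. -/
open Real

/-- Inverse of the cube metric `g = diag(π²/sin²(πxⁱ))`. -/
noncomputable def cubeGinv (n : ℕ) (x : Fin n → ℝ) : Matrix (Fin n) (Fin n) ℝ :=
  Matrix.diagonal fun i => (Real.sin (Real.pi * x i)) ^ 2 / Real.pi ^ 2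

/-- `√(det g)` for the cube metric. -/
noncomputable def cubeSqrtDet (n : ℕ) (x : Fin n → ℝ) : ℝ :=
  Real.sqrt (∏ i, Real.pi ^ 2 / (Real.sin (Real.pi * x i)) ^ 2)

/-- The coordinate Laplace–Beltrami operator of the cube metric. -/
noncomputable def cubeLaplacian (n : ℕ) (f : (Fin n → ℝ) → ℝ) (x : Fin n → ℝ) : ℝ :=
  (cubeSqrtDet n x)⁻¹ *
    ∑ k, fderiv ℝ
      (fun y => cubeSqrtDet n y * ∑ l, cubeGinv n y k l * fderiv ℝ f y (Pi.single l 1))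
      x (Pi.single k 1)

section Aux

variable {n : ℕ}

lemma hasFDerivAt_comp_proj {φ : ℝ → ℝ} {c : ℝ} (x : Fin n → ℝ) (i : Fin n)
    (h : HasDerivAt φ c (x i)) :
    HasFDerivAt (fun y : Fin n → ℝ => φ (y i))
      (c • (ContinuousLinearMap.proj i : (Fin n → ℝ) →L[ℝ] ℝ)) x := by
  have h2 := h.hasFDerivAt.comp x
    ((ContinuousLinearMap.proj i : (Fin n → ℝ) →L[ℝ] ℝ)).hasFDerivAt
  refine HasFDerivAt.congr_fderiv h2 ?_
  ext v
  simp [mul_comm]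

lemma hasDerivAt_logtan {t : ℝ} (ht : t ∈ Set.Ioo (0:ℝ) 1) :
    HasDerivAt (fun s => Real.log (Real.tan (π * s / 2))) (π / Real.sin (π * t)) t := by
  have hpi := Real.pi_pos
  have hu1 : 0 < π * t / 2 := by nlinarith [ht.1]
  have hu2 : π * t / 2 < π / 2 := by nlinarith [ht.2]
  have hcos : Real.cos (π * t / 2) > 0 :=
    Real.cos_pos_of_mem_Ioo ⟨by linarith, hu2⟩
  have hsin : Real.sin (π * t / 2) > 0 :=
    Real.sin_pos_of_pos_of_lt_pi hu1 (by linarith)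
  have htan : Real.tan (π * t / 2) ≠ 0 := by
    rw [Real.tan_eq_sin_div_cos]
    positivity
  have h1 : HasDerivAt (fun s : ℝ => π * s / 2) (π / 2) t := by
    simpa using ((hasDerivAt_id t).const_mul π).div_const 2
  have h2 : HasDerivAt Real.tan (1 / Real.cos (π * t / 2) ^ 2) (π * t / 2) :=
    Real.hasDerivAt_tan hcos.ne'
  have h3 := (h2.comp t h1)
  have h4 := (Real.hasDerivAt_log htan).comp t h3
  refine h4.congr_deriv ?_
  rw [Real.tan_eq_sin_div_cos]
  have h5 : Real.sin (π * t) = 2 * Real.sin (π * t / 2) * Real.cos (π * t / 2) := by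
    rw [← Real.sin_two_mul]; ring_nf
  rw [h5]
  field_simp

lemma sin_pos_of_cube {t : ℝ} (ht : t ∈ Set.Ioo (0:ℝ) 1) : 0 < Real.sin (π * t) :=
  Real.sin_pos_of_pos_of_lt_pi (by nlinarith [Real.pi_pos, ht.1])
    (by nlinarith [Real.pi_pos, ht.2])

lemma fderiv_logtan (x : Fin n → ℝ) (hx : ∀ i, x i ∈ Set.Ioo (0:ℝ) 1) (i k : Fin n) :
    fderiv ℝ (fun y => Real.log (Real.tan (π * y i / 2))) x (Pi.single k 1)
      = if k = i then π / Real.sin (π * x i) else 0 := by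
  have h := hasFDerivAt_comp_proj x i (hasDerivAt_logtan (hx i))
  rw [h.fderiv]
  by_cases hk : k = i <;> simp [hk, Pi.single_apply]

lemma cubeSqrtDet_eq (x : Fin n → ℝ) (hx : ∀ i, x i ∈ Set.Ioo (0:ℝ) 1) :
    cubeSqrtDet n x = ∏ j, π / Real.sin (π * x j) := by
  have hpos : (0:ℝ) ≤ ∏ j, π / Real.sin (π * x j) :=
    Finset.prod_nonneg fun j _ => div_nonneg Real.pi_pos.le (sin_pos_of_cube (hx j)).le
  rw [cubeSqrtDet]
  have : ∀ j : Fin n, π ^ 2 / (Real.sin (π * x j)) ^ 2 = (π / Real.sin (π * x j)) ^ 2 :=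
    fun j => (div_pow _ _ 2).symm
  rw [show (∏ i, π ^ 2 / (Real.sin (π * x i)) ^ 2) = (∏ j, π / Real.sin (π * x j)) ^ 2 by
    rw [← Finset.prod_pow]; exact Finset.prod_congr rfl fun j _ => this j]
  exact Real.sqrt_sq hpos

lemma cube_laplacian_zero (x : Fin n → ℝ) (hx : ∀ i, x i ∈ Set.Ioo (0:ℝ) 1) (i : Fin n) :
    cubeLaplacian n (fun y => Real.log (Real.tan (Real.pi * y i / 2))) x = 0 := by
  set U : Set (Fin n → ℝ) := Set.univ.pi fun _ => Set.Ioo (0:ℝ) 1 with hUdef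
  have hUopen : IsOpen U := isOpen_set_pi Set.finite_univ fun _ _ => isOpen_Ioo
  have hxU : x ∈ U := fun j _ => hx j
  have hnhds : U ∈ nhds x := hUopen.mem_nhds hxU
  have hmem : ∀ y ∈ U, ∀ j, y j ∈ Set.Ioo (0:ℝ) 1 := fun y hy j => hy j (Set.mem_univ j)
  -- pointwise formula for the inner function, on U
  have hG : ∀ (k : Fin n), ∀ y ∈ U,
      cubeSqrtDet n y * ∑ l, cubeGinv n y k l *
        fderiv ℝ (fun z => Real.log (Real.tan (Real.pi * z i / 2))) y (Pi.single l 1)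
      = if k = i then ∏ j ∈ Finset.univ.erase i, π / Real.sin (π * y j) else 0 := by
    intro k y hy
    have hs : ∀ j, Real.sin (π * y j) ≠ 0 := fun j => (sin_pos_of_cube (hmem y hy j)).ne'
    have hsum : (∑ l, cubeGinv n y k l *
        fderiv ℝ (fun z => Real.log (Real.tan (Real.pi * z i / 2))) y (Pi.single l 1))
        = if k = i then Real.sin (π * y i) / π else 0 := by
      simp only [fderiv_logtan y (hmem y hy), cubeGinv, Matrix.diagonal_apply]
      rw [Finset.sum_eq_single i]
      · by_cases hk : k = i <;> simp [hk]
        field_simp [hs i]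
      · intro b _ hb; simp [hb]
      · simp
    rw [hsum]
    by_cases hk : k = i
    · subst hk
      rw [if_pos rfl, if_pos rfl, cubeSqrtDet_eq y (hmem y hy),
        ← Finset.mul_prod_erase Finset.univ _ (Finset.mem_univ k)]
      have h1 : π / Real.sin (π * y k) * (Real.sin (π * y k) / π) = 1 := by
        field_simp [hs k]
      calc π / Real.sin (π * y k) * (∏ j ∈ Finset.univ.erase k, π / Real.sin (π * y j)) *
            (Real.sin (π * y k) / π)
          = (∏ j ∈ Finset.univ.erase k, π / Real.sin (π * y j)) *
            (π / Real.sin (π * y k) * (Real.sin (π * y k) / π)) := by ring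
        _ = _ := by rw [h1, mul_one]
    · simp [hk]
  -- each summand of the Laplacian vanishes
  have hterm : ∀ k : Fin n,
      fderiv ℝ (fun y => cubeSqrtDet n y * ∑ l, cubeGinv n y k l *
        fderiv ℝ (fun z => Real.log (Real.tan (Real.pi * z i / 2))) y (Pi.single l 1))
        x (Pi.single k 1) = 0 := by
    intro k
    by_cases hk : k = i
    · subst hk
      have heq : (fun y => cubeSqrtDet n y * ∑ l, cubeGinv n y k l *
            fderiv ℝ (fun z => Real.log (Real.tan (Real.pi * z k / 2))) y (Pi.single l 1))
          =ᶠ[nhds x] fun y => ∏ j ∈ Finset.univ.erase k, π / Real.sin (π * y j) := by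
        filter_upwards [hnhds] with y hy
        rw [hG k y hy, if_pos rfl]
      rw [heq.fderiv_eq]
      -- derivative of the product
      have hfac : ∀ j ∈ Finset.univ.erase k,
          HasFDerivAt (fun y : Fin n → ℝ => π / Real.sin (π * y j))
            ((π * (-(Real.cos (π * x j) * π) / Real.sin (π * x j) ^ 2)) •
              (ContinuousLinearMap.proj j : (Fin n → ℝ) →L[ℝ] ℝ)) x := by
        intro j _
        have hsj : Real.sin (π * x j) ≠ 0 := (sin_pos_of_cube (hx j)).ne'
        have h1 : HasDerivAt (fun t : ℝ => Real.sin (π * t)) (Real.cos (π * x j) * π) (x j) := by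
          have := (Real.hasDerivAt_sin (π * x j)).comp (x j)
            ((hasDerivAt_id (x j)).const_mul π)
          simp at this; exact this
        have h2 : HasDerivAt (fun t : ℝ => π / Real.sin (π * t))
            (π * (-(Real.cos (π * x j) * π) / Real.sin (π * x j) ^ 2)) (x j) := by
          simp only [div_eq_mul_inv]
          exact (h1.inv hsj).const_mul π
        exact hasFDerivAt_comp_proj x j h2
      have hP := HasFDerivAt.finset_prod hfac
      rw [hP.fderiv]
      rw [ContinuousLinearMap.sum_apply]
      apply Finset.sum_eq_zero
      intro j hj
      have hjk : j ≠ k := (Finset.mem_erase.mp hj).1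
      simp [Pi.single_apply, hjk]
    · have heq : (fun y => cubeSqrtDet n y * ∑ l, cubeGinv n y k l *
            fderiv ℝ (fun z => Real.log (Real.tan (Real.pi * z i / 2))) y (Pi.single l 1))
          =ᶠ[nhds x] fun _ => (0:ℝ) := by
        filter_upwards [hnhds] with y hy
        rw [hG k y hy, if_neg hk]
      rw [heq.fderiv_eq, fderiv_fun_const]
      simp
  rw [cubeLaplacian]
  rw [Finset.sum_eq_zero fun k _ => hterm k, mul_zero]

end Aux

/-- For the metric `g = ∑ π²(dxⁱ)²/sin²(πxⁱ)` on the cube `(0,1)ⁿ`, the functions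
`fⁱ = log(tan(πxⁱ/2))` are harmonic, have unit gradient, and mutually orthogonal gradients. -/
theorem cube_coordinates (n : ℕ) :
    ∀ x : Fin n → ℝ, (∀ i, x i ∈ Set.Ioo (0 : ℝ) 1) →
      (∀ i, cubeLaplacian n (fun y => Real.log (Real.tan (Real.pi * y i / 2))) x = 0) ∧
      (∀ i, ∑ k, ∑ l, cubeGinv n x k l *
          fderiv ℝ (fun y => Real.log (Real.tan (Real.pi * y i / 2))) x (Pi.single k 1) *
          fderiv ℝ (fun y => Real.log (Real.tan (Real.pi * y i / 2))) x (Pi.single l 1) = 1) ∧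
      (∀ i j, i ≠ j → ∑ k, ∑ l, cubeGinv n x k l *
          fderiv ℝ (fun y => Real.log (Real.tan (Real.pi * y i / 2))) x (Pi.single k 1) *
          fderiv ℝ (fun y => Real.log (Real.tan (Real.pi * y j / 2))) x (Pi.single l 1) = 0) := by
  intro x hx
  refine ⟨fun i => cube_laplacian_zero x hx i, fun i => ?_, fun i j hij => ?_⟩
  · have hs : Real.sin (π * x i) ≠ 0 := (sin_pos_of_cube (hx i)).ne'
    simp only [fderiv_logtan x hx i, cubeGinv, Matrix.diagonal_apply]
    rw [Finset.sum_eq_single i, Finset.sum_eq_single i]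
    · simp only [if_true]
      field_simp
    · intro b _ hb; simp [hb, Ne.symm hb]
    · simp
    · intro b _ hb
      rw [Finset.sum_eq_single i]
      · simp [hb]
      · intro c _ hc; simp [hc]
      · simp
    · simp
  · simp only [fderiv_logtan x hx i, fderiv_logtan x hx j, cubeGinv, Matrix.diagonal_apply]
    apply Finset.sum_eq_zero
    intro k _
    apply Finset.sum_eq_zero
    intro l _
    by_cases hk : k = i <;> by_cases hl : l = j <;> simp [hk, hl, hij]
end

section
/- For the Hessian metric g of the Lorentz cone barrier, det(g_{ij}(x)) = ((n+1)/(xᵀAx))^{n+1}, so that √det g = exp(F(x)) where F(x) = −((n+1)/2) log(xᵀAx) + ((n+1)/2) log(n+1). In particular, F satisfies the Monge–Ampère equation F = (1/2) log det D²F. -/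
open Real Matrix

/-- The Lorentzian matrix `A = diag(1, -1, …, -1)` on `ℝ^{n+1}`. -/
def lorentzA (n : ℕ) : Matrix (Fin (n + 1)) (Fin (n + 1)) ℝ :=
  Matrix.diagonal fun i => if i = 0 then 1 else -1

/-- The Lorentz quadratic form `xᵀAx`. -/
def lorentzQ (n : ℕ) (x : Fin (n + 1) → ℝ) : ℝ :=
  x ⬝ᵥ (lorentzA n).mulVec x

/-- The canonical barrier of the Lorentz cone. -/
noncomputable def lorentzF (n : ℕ) (x : Fin (n + 1) → ℝ) : ℝ :=
  -(((n : ℝ) + 1) / 2) * Real.log (lorentzQ n x) + (((n : ℝ) + 1) / 2) * Real.log ((n : ℝ) + 1)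

/-- The Hessian metric of the Lorentz barrier, in explicit form. -/
noncomputable def lorentzG (n : ℕ) (x : Fin (n + 1) → ℝ) : Matrix (Fin (n + 1)) (Fin (n + 1)) ℝ :=
  Matrix.of fun i j =>
    -(((n : ℝ) + 1) / lorentzQ n x) *
      (lorentzA n i j -
        2 * ((lorentzA n).mulVec x i) * ((lorentzA n).mulVec x j) / lorentzQ n x)

/-- The claimed inverse metric `gⁱʲ = -(1/(n+1))((xᵀAx)Bⁱʲ - 2xⁱxʲ)` (with `B = A⁻¹ = A`). -/
noncomputable def lorentzGinv (n : ℕ) (x : Fin (n + 1) → ℝ) :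
    Matrix (Fin (n + 1)) (Fin (n + 1)) ℝ :=
  Matrix.of fun i j => -(1 / ((n : ℝ) + 1)) * (lorentzQ n x * lorentzA n i j - 2 * x i * x j)

lemma lorentzA_det (n : ℕ) : (lorentzA n).det = (-1) ^ n := by
  rw [lorentzA, det_diagonal, Fin.prod_univ_succ]
  simp [Fin.succ_ne_zero]


/-- `det g = ((n+1)/(xᵀAx))^{n+1}`, hence `√(det g) = exp F` and `F` satisfies the
Monge–Ampère equation `F = (1/2) log det D²F`. -/
theorem lorentz_metric_det (n : ℕ) :
    ∀ x : Fin (n + 1) → ℝ, 0 < x 0 → 0 < lorentzQ n x →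
      (lorentzG n x).det = (((n : ℝ) + 1) / lorentzQ n x) ^ (n + 1) ∧
      Real.sqrt (lorentzG n x).det = Real.exp (lorentzF n x) ∧
      lorentzF n x = (1 / 2) * Real.log (lorentzG n x).det := by
  intro x hx hQ
  set Q := lorentzQ n x with hQdef
  set c : ℝ := (n : ℝ) + 1 with hc
  have hcpos : 0 < c := by positivity
  have hQne : Q ≠ 0 := ne_of_gt hQ
  set u : Fin (n + 1) → ℝ := (lorentzA n).mulVec x with hu
  -- rewrite g as a scalar multiple of a rank-one update
  have hG : lorentzG n x =
      (-(c / Q)) • (lorentzA n * (1 + replicateCol (Fin 1) ((-(2/Q)) • x) * replicateRow (Fin 1) u)) := by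
    ext i j
    have : (lorentzA n * (replicateCol (Fin 1) ((-(2/Q)) • x) * replicateRow (Fin 1) u)) i j
        = -(2/Q) * u i * u j := by
      rw [← Matrix.mul_assoc]
      simp [Matrix.mul_apply, Finset.mul_sum, hu, Matrix.mulVec, dotProduct]
      ring_nf
      refine Finset.sum_congr rfl fun k _ => ?_
      congr 1
      exact congrArg (· * lorentzA n j k) (Finset.sum_congr rfl fun l _ => by ring)
    simp only [Matrix.smul_apply, Matrix.mul_add, Matrix.mul_one, Matrix.add_apply, this,
      lorentzG, Matrix.of_apply, ← hQdef, ← hu]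
    simp only [smul_eq_mul]
    field_simp
    ring
  have hux : u ⬝ᵥ x = Q := by
    rw [hQdef, lorentzQ, dotProduct_comm]
  have hdet1 : (1 + replicateCol (Fin 1) ((-(2/Q)) • x) * replicateRow (Fin 1) u).det = -1 := by
    erw [det_one_add_replicateCol_mul_replicateRow, dotProduct_smul, hux]
    rw [smul_eq_mul, neg_mul, div_mul_cancel₀ 2 hQne]
    ring
  have hdet : (lorentzG n x).det = (c / Q) ^ (n + 1) := by
    rw [hG, det_smul, det_mul, hdet1, lorentzA_det, Fintype.card_fin]
    rw [show ((-1:ℝ))^n * -1 = (-1)^(n+1) by ring, ← mul_pow]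
    ring_nf
  refine ⟨hdet, ?_, ?_⟩
  · have hF : lorentzF n x = (c / 2) * Real.log (c / Q) := by
      rw [lorentzF, Real.log_div (ne_of_gt hcpos) hQne, ← hQdef, ← hc]; ring
    rw [hdet, hF]
    have ht : (0:ℝ) < c / Q := div_pos hcpos hQ
    rw [Real.sqrt_eq_rpow, ← Real.rpow_natCast (c/Q) (n+1), ← Real.rpow_mul ht.le,
      Real.rpow_def_of_pos ht]
    push_cast
    rw [hc]
    ring_nf
  · have hF : lorentzF n x = (c / 2) * Real.log (c / Q) := by
      rw [lorentzF, Real.log_div (ne_of_gt hcpos) hQne, ← hQdef, ← hc]; ring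
    rw [hdet, Real.log_pow, hF]
    push_cast
    ring
end

section
/- Let b ∈ L⁺_{n+1} be a null vector (b⁰ > 0, bᵀBb = 0) and define f_b(x) = (√(n+1)/2) · log((bᵀx)²/(xᵀAx)) on the interior of the Lorentz cone. Then |∇f_b|²_g := gⁱʲ ∂ᵢf_b ∂ⱼf_b = 1 identically, where gⁱʲ = −(1/(n+1))((xᵀAx)Bⁱʲ − 2xⁱxʲ). -/
open Real Matrix

/-- The auxiliary function `f_b(x) = (√(n+1)/2) log((bᵀx)²/(xᵀAx))`. -/
noncomputable def lorentzFb (n : ℕ) (b x : Fin (n + 1) → ℝ) : ℝ :=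
  (Real.sqrt ((n : ℝ) + 1) / 2) * Real.log ((b ⬝ᵥ x) ^ 2 / lorentzQ n x)

noncomputable def dotCLM {m : ℕ} (b : Fin m → ℝ) : (Fin m → ℝ) →L[ℝ] ℝ :=
  LinearMap.toContinuousLinearMap
    { toFun := fun v => b ⬝ᵥ v
      map_add' := fun u v => by simp [dotProduct_add]
      map_smul' := fun t v => by simp [dotProduct_smul] }

@[simp] lemma dotCLM_apply {m : ℕ} (b v : Fin m → ℝ) : dotCLM b v = b ⬝ᵥ v := rfl

lemma hasFDerivAt_dot {m : ℕ} (b x : Fin m → ℝ) :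
    HasFDerivAt (fun y => b ⬝ᵥ y) (dotCLM b) x := (dotCLM b).hasFDerivAt

/-- diagonal entries -/
def dd (n : ℕ) (i : Fin (n + 1)) : ℝ := if i = 0 then 1 else -1

lemma lorentzQ_eq (n : ℕ) (y : Fin (n + 1) → ℝ) :
    lorentzQ n y = ∑ i, dd n i * (y i * y i) := by
  unfold lorentzQ lorentzA dotProduct dd
  refine Finset.sum_congr rfl fun i _ => ?_
  rw [Matrix.mulVec_diagonal]
  ring

lemma continuous_lorentzQ (n : ℕ) : Continuous (lorentzQ n) := by
  have : lorentzQ n = fun y => ∑ i, dd n i * (y i * y i) := funext (lorentzQ_eq n)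
  rw [this]
  exact continuous_finset_sum _ fun i _ =>
    continuous_const.mul ((continuous_apply i).mul (continuous_apply i))

lemma hasFDerivAt_lorentzQ (n : ℕ) (x : Fin (n + 1) → ℝ) :
    HasFDerivAt (lorentzQ n) (dotCLM fun j => 2 * dd n j * x j) x := by
  have h : ∀ i : Fin (n + 1), HasFDerivAt (fun y : Fin (n + 1) → ℝ => dd n i * (y i * y i))
      ((dd n i * (2 * x i)) • (ContinuousLinearMap.proj (R := ℝ) (φ := fun _ : Fin (n+1) => ℝ) i)) x := by
    intro i
    have h1 : HasFDerivAt (fun y : Fin (n + 1) → ℝ => y i)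
        (ContinuousLinearMap.proj (R := ℝ) (φ := fun _ : Fin (n+1) => ℝ) i) x := (ContinuousLinearMap.proj (R := ℝ) (φ := fun _ : Fin (n+1) => ℝ) i).hasFDerivAt
    have h2 := (h1.fun_mul h1).const_mul (dd n i)
    refine h2.congr_fderiv ?_
    ext v
    simp
    ring
  have hs := HasFDerivAt.fun_sum (fun i (_ : i ∈ Finset.univ) => h i)
  have he : (fun y => ∑ i, dd n i * (y i * y i)) = lorentzQ n :=
    (funext (lorentzQ_eq n)).symm
  rw [he] at hs
  refine hs.congr_fderiv ?_
  ext v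
  simp [dotProduct]
  refine Finset.sum_congr rfl fun i _ => ?_
  ring

lemma fderiv_lorentzFb (n : ℕ) (b x : Fin (n + 1) → ℝ)
    (hβ : 0 < b ⬝ᵥ x) (hQ : 0 < lorentzQ n x) (i : Fin (n + 1)) :
    fderiv ℝ (lorentzFb n b) x (Pi.single i 1) =
      Real.sqrt ((n : ℝ) + 1) * (b i / (b ⬝ᵥ x) - dd n i * x i / lorentzQ n x) := by
  set c : ℝ := Real.sqrt ((n : ℝ) + 1) / 2 with hc
  have hu : Continuous fun y : Fin (n + 1) → ℝ => b ⬝ᵥ y := by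
    have := (dotCLM b).continuous
    simpa [dotCLM] using this
  have h1 : ∀ᶠ y in nhds x, 0 < b ⬝ᵥ y := (hu.tendsto x).eventually (eventually_gt_nhds hβ)
  have h2 : ∀ᶠ y in nhds x, 0 < lorentzQ n y :=
    ((continuous_lorentzQ n).tendsto x).eventually (eventually_gt_nhds hQ)
  have hev : (fun y => c * (2 * Real.log (b ⬝ᵥ y) - Real.log (lorentzQ n y)))
      =ᶠ[nhds x] lorentzFb n b := by
    filter_upwards [h1, h2] with y hy1 hy2
    unfold lorentzFb
    rw [Real.log_div (by positivity) hy2.ne', Real.log_pow]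
    push_cast
    ring
  have H : HasFDerivAt (fun y => c * (2 * Real.log (b ⬝ᵥ y) - Real.log (lorentzQ n y)))
      (c • ((2 : ℝ) • ((b ⬝ᵥ x)⁻¹ • dotCLM b) -
        (lorentzQ n x)⁻¹ • dotCLM fun j => 2 * dd n j * x j)) x := by
    exact ((((hasFDerivAt_dot b x).log hβ.ne').const_mul (2 : ℝ)).sub
      (((hasFDerivAt_lorentzQ n x).log hQ.ne'))).const_mul c
  rw [← hev.fderiv_eq, H.fderiv]
  have e1 : b ⬝ᵥ Pi.single i 1 = b i := by simp
  have e2 : (fun j => 2 * dd n j * x j) ⬝ᵥ Pi.single i 1 = 2 * dd n i * x i := by simp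
  simp only [ContinuousLinearMap.smul_apply, ContinuousLinearMap.sub_apply, dotCLM_apply,
    e1, e2, smul_eq_mul]
  have h4 : Real.sqrt ((n : ℝ) + 1) = 2 * c := by rw [hc]; ring
  rw [h4]
  field_simp

lemma dot_pos (n : ℕ) (b : Fin (n + 1) → ℝ) (hb0 : 0 < b 0)
    (hbnull : b ⬝ᵥ (lorentzA n).mulVec b = 0) (x : Fin (n + 1) → ℝ)
    (hx0 : 0 < x 0) (hQ : 0 < lorentzQ n x) : 0 < b ⬝ᵥ x := by
  have key : ∀ y : Fin (n + 1) → ℝ,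
      y ⬝ᵥ (lorentzA n).mulVec y = y 0 ^ 2 - ∑ i : Fin n, y i.succ ^ 2 := by
    intro y
    have : y ⬝ᵥ (lorentzA n).mulVec y = ∑ i, dd n i * (y i * y i) := lorentzQ_eq n y
    rw [this, Fin.sum_univ_succ]
    simp [dd, Fin.succ_ne_zero]
    ring_nf
  have hnull' : b 0 ^ 2 = ∑ i : Fin n, b i.succ ^ 2 := by
    have := key b; rw [hbnull] at this; linarith
  have hQ' : ∑ i : Fin n, x i.succ ^ 2 < x 0 ^ 2 := by
    have := key x; unfold lorentzQ at hQ; rw [this] at hQ; linarith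
  have hdot : b ⬝ᵥ x = b 0 * x 0 + ∑ i : Fin n, b i.succ * x i.succ := by
    unfold dotProduct; rw [Fin.sum_univ_succ]
  have cs := Finset.sum_mul_sq_le_sq_mul_sq Finset.univ
    (fun i : Fin n => b i.succ) (fun i : Fin n => x i.succ)
  have hs0 : (0 : ℝ) ≤ ∑ i : Fin n, x i.succ ^ 2 :=
    Finset.sum_nonneg fun i _ => sq_nonneg _
  rw [hdot]
  have h5 : b 0 ^ 2 * (∑ i : Fin n, x i.succ ^ 2) < b 0 ^ 2 * x 0 ^ 2 :=
    mul_lt_mul_of_pos_left hQ' (by positivity)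
  nlinarith [cs, hnull', h5, mul_pos hb0 hx0,
    sq_nonneg (b 0 * x 0 + ∑ i : Fin n, b i.succ * x i.succ)]

lemma sum_alg {N : ℕ} (d b x G : Fin N → ℝ) (c β Q m : ℝ)
    (hd : ∀ i, d i = 1 ∨ d i = -1) (hβ : β ≠ 0) (hQ : Q ≠ 0) (hm : m ≠ 0)
    (hc : c * c = m) (hN : ∑ i, d i * (b i * b i) = 0)
    (hB : ∑ i, b i * x i = β) (hQs : ∑ i, d i * (x i * x i) = Q)
    (hG : ∀ i, G i = c * (Q * b i - β * (d i * x i)) / (β * Q)) :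
    ∑ i, ∑ j, (-(1/m) * (Q * (if i = j then d i else 0) - 2 * x i * x j)) * G i * G j = 1 := by
  have T2 : ∑ i, x i * G i = 0 := by
    have h : ∀ i, x i * G i = (c/(β*Q)) * (Q * (b i * x i) - β * (d i * (x i * x i))) := by
      intro i; rw [hG]; ring
    rw [Finset.sum_congr rfl fun i _ => h i, ← Finset.mul_sum,
        Finset.sum_sub_distrib, ← Finset.mul_sum, ← Finset.mul_sum, hB, hQs]
    ring
  have T1 : ∑ i, d i * (G i * G i) = -(c*c)/Q := by
    have h : ∀ i, d i * (G i * G i) = (c*c/(β*β*(Q*Q))) *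
        (Q*Q*(d i * (b i * b i)) - 2*Q*β*(b i * x i) + β*β*(d i*(x i * x i))) := by
      intro i; rcases hd i with hh | hh <;> rw [hG, hh] <;> ring
    rw [Finset.sum_congr rfl fun i _ => h i, ← Finset.mul_sum,
        Finset.sum_add_distrib, Finset.sum_sub_distrib,
        ← Finset.mul_sum, ← Finset.mul_sum, ← Finset.mul_sum, hN, hB, hQs]
    field_simp
    ring
  have step : ∀ i, (∑ j, (-(1/m) * (Q * (if i = j then d i else 0) - 2 * x i * x j)) * G i * G j)
      = -(1/m) * Q * (d i * (G i * G i)) + (2/m) * (x i * G i) * (∑ j, x j * G j) := by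
    intro i
    have h : ∀ j, (-(1/m) * (Q * (if i = j then d i else 0) - 2 * x i * x j)) * G i * G j
        = (if i = j then -(1/m) * Q * (d i * (G i * G i)) else 0)
          + (2/m) * (x i * G i) * (x j * G j) := by
      intro j
      split_ifs with hh
      · subst hh; ring
      · ring
    rw [Finset.sum_congr rfl fun j _ => h j, Finset.sum_add_distrib,
        Finset.sum_ite_eq, if_pos (Finset.mem_univ i), ← Finset.mul_sum]
  rw [Finset.sum_congr rfl fun i _ => step i, Finset.sum_add_distrib, T2]
  simp only [mul_zero, Finset.sum_const_zero, add_zero]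
  rw [← Finset.mul_sum, T1, hc]
  field_simp


/-- For a forward null vector `b`, the function `f_b` has unit gradient in the
Lorentz Hessian metric. -/
theorem lorentz_fb_unit_gradient (n : ℕ) (b : Fin (n + 1) → ℝ)
    (hb0 : 0 < b 0) (hbnull : b ⬝ᵥ (lorentzA n).mulVec b = 0) :
    ∀ x : Fin (n + 1) → ℝ, 0 < x 0 → 0 < lorentzQ n x →
      ∑ i, ∑ j, lorentzGinv n x i j *
          fderiv ℝ (lorentzFb n b) x (Pi.single i 1) *
          fderiv ℝ (lorentzFb n b) x (Pi.single j 1) = 1 := by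
  intro x hx0 hQpos
  have hβ : 0 < b ⬝ᵥ x := dot_pos n b hb0 hbnull x hx0 hQpos
  have key := fderiv_lorentzFb n b x hβ hQpos
  have hform : ∀ i j, lorentzGinv n x i j =
      -(1/((n:ℝ)+1)) * (lorentzQ n x * (if i = j then dd n i else 0) - 2 * x i * x j) := by
    intro i j
    simp [lorentzGinv, lorentzA, Matrix.diagonal_apply, dd]
  simp only [key, hform]
  have hn1 : (0:ℝ) < (n:ℝ) + 1 := by positivity
  refine sum_alg (dd n) b x _ (Real.sqrt ((n:ℝ)+1)) (b ⬝ᵥ x) (lorentzQ n x) ((n:ℝ)+1)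
    (fun i => by by_cases h : i = 0 <;> simp [dd, h]) hβ.ne' hQpos.ne' hn1.ne'
    (Real.mul_self_sqrt hn1.le) ((lorentzQ_eq n b).symm.trans hbnull) rfl
    (lorentzQ_eq n x).symm (fun i => by
      rw [div_sub_div _ _ hβ.ne' hQpos.ne', mul_div_assoc]
      ring_nf)
end
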